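/- arXiv:1811.12320 — 3 statements merged into one kernel-verified Lean document; each statement's English description precedes it below -/
import Mathlib

section
/- Under the assumptions of the unconstrained frequency-control QP (minimize (1/2)(p^C)ᵀWp^C subject to CBCᵀη = p^C + p^D, W positive definite diagonal, C incidence matrix of connected graph, B positive diagonal), the optimal control is p^C_i = -(Σ_k p^D_k)/(w_i Σ_k w_k^{-1}) for each i, i.e., the optimal control allocates the total disturbance proportionally to the inverse costs. -/
open Matrix Finset

def IsIncidenceMatrix {n m : ℕ} (C : Matrix (Fin n) (Fin m) ℝ) : Prop :=
  ∀ e : Fin m, ∃ i j : Fin n, i ≠ j ∧ C i e = 1 ∧ C j e = -1 ∧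
    ∀ k : Fin n, k ≠ i → k ≠ j → C k e = 0

def IncidenceConnected {n m : ℕ} (C : Matrix (Fin n) (Fin m) ℝ) : Prop :=
  (SimpleGraph.fromRel (fun i j => ∃ e : Fin m, C i e ≠ 0 ∧ C j e ≠ 0)).Connected

lemma incidence_sum {n m : ℕ} {C : Matrix (Fin n) (Fin m) ℝ} (hC : IsIncidenceMatrix C)
    (e : Fin m) :
    ∃ i j : Fin n, i ≠ j ∧ (∀ k : Fin n, k ≠ i → k ≠ j → C k e = 0) ∧
      ∀ x : Fin n → ℝ, ∑ k, C k e * x k = x i - x j := by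
  obtain ⟨i, j, hij, hi, hj, ho⟩ := hC e
  refine ⟨i, j, hij, ho, fun x => ?_⟩
  have h1 : ∀ k : Fin n, C k e * x k =
      (if k = i then x k else 0) + (if k = j then -x k else 0) := by
    intro k
    by_cases h1 : k = i
    · subst h1; rw [hi, if_pos rfl, if_neg hij]; ring
    · by_cases h2 : k = j
      · subst h2; rw [hj, if_neg h1, if_pos rfl]; ring
      · rw [ho k h1 h2, if_neg h1, if_neg h2]; ring
  rw [Finset.sum_congr rfl fun k _ => h1 k, Finset.sum_add_distrib,
    Finset.sum_ite_eq' Finset.univ i, Finset.sum_ite_eq' Finset.univ j]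
  simp [sub_eq_add_neg]

lemma connected_constant {n m : ℕ} {C : Matrix (Fin n) (Fin m) ℝ}
    (hC : IsIncidenceMatrix C) (hconn : IncidenceConnected C)
    (x : Fin n → ℝ) (hx : ∀ e : Fin m, ∑ k, C k e * x k = 0) :
    ∀ i j : Fin n, x i = x j := by
  have hadj : ∀ i j : Fin n,
      (SimpleGraph.fromRel (fun i j => ∃ e : Fin m, C i e ≠ 0 ∧ C j e ≠ 0)).Adj i j →
      x i = x j := by
    intro i j h
    rw [SimpleGraph.fromRel_adj] at h
    obtain ⟨hne, hr⟩ := h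
    have hex : ∃ e : Fin m, C i e ≠ 0 ∧ C j e ≠ 0 := by
      rcases hr with ⟨e, h1, h2⟩ | ⟨e, h1, h2⟩
      · exact ⟨e, h1, h2⟩
      · exact ⟨e, h2, h1⟩
    obtain ⟨e, h1, h2⟩ := hex
    obtain ⟨a, b', hab, ho, hsum⟩ := incidence_sum hC e
    have hsx := hx e
    rw [hsum x] at hsx
    have hi : i = a ∨ i = b' := by
      by_contra hcon
      push_neg at hcon
      exact h1 (ho i hcon.1 hcon.2)
    have hj : j = a ∨ j = b' := by
      by_contra hcon
      push_neg at hcon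
      exact h2 (ho j hcon.1 hcon.2)
    rcases hi with rfl | rfl <;> rcases hj with rfl | rfl
    · exact absurd rfl hne
    · linarith
    · linarith
    · exact absurd rfl hne
  intro i j
  obtain ⟨p⟩ := hconn.preconnected i j
  induction p with
  | nil => rfl
  | cons h p ih => exact (hadj _ _ h).trans ih

/-- The optimal control of the unconstrained frequency-control QP allocates the total
disturbance proportionally to the inverse costs:
`p^C_i = -(Σ_k p^D_k)/(w_i Σ_k w_k⁻¹)`. -/
theorem qp_optimal_control_formula {n m : ℕ}
    (C : Matrix (Fin n) (Fin m) ℝ) (b : Fin m → ℝ) (w : Fin n → ℝ)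
    (hC : IsIncidenceMatrix C) (hconn : IncidenceConnected C)
    (hb : ∀ e, 0 < b e) (hw : ∀ i, 0 < w i) (pD : Fin n → ℝ) :
    ∀ pC η : Fin n → ℝ,
      ((C * Matrix.diagonal b * Cᵀ) *ᵥ η = pC + pD ∧
        ∀ pC' η' : Fin n → ℝ, (C * Matrix.diagonal b * Cᵀ) *ᵥ η' = pC' + pD →
          (1 / 2) * ∑ i, w i * (pC i)^2 ≤ (1 / 2) * ∑ i, w i * (pC' i)^2) →
      ∀ i, pC i = -(∑ k, pD k) / (w i * ∑ k, (w k)⁻¹) := by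
  intro pC η hmain i
  obtain ⟨hfeas, hopt⟩ := hmain
  -- generic formula for applying the Laplacian
  have hLapp : ∀ (z : Fin n → ℝ) (i : Fin n),
      ((C * Matrix.diagonal b * Cᵀ) *ᵥ z) i = ∑ e, C i e * b e * (∑ k, C k e * z k) := by
    intro z i
    simp only [Matrix.mulVec, dotProduct, Matrix.mul_apply, Matrix.transpose_apply,
      Matrix.mul_diagonal, Finset.sum_mul]
    rw [Finset.sum_comm]
    refine Finset.sum_congr rfl fun e _ => ?_
    rw [Finset.mul_sum]
    refine Finset.sum_congr rfl fun k _ => ?_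
    rw [Finset.sum_eq_single e]
    · rw [Matrix.diagonal_apply_eq]; ring
    · intro f _ hf
      rw [Matrix.diagonal_apply_ne _ hf]
      ring
    · intro h
      exact absurd (Finset.mem_univ e) h
  -- column sums of C vanish
  have hcol : ∀ e : Fin m, ∑ k, C k e = 0 := by
    intro e
    obtain ⟨a, b', _, _, hsum⟩ := incidence_sum hC e
    have := hsum (fun _ => 1)
    simpa using this
  set x : Fin n → ℝ := fun k => w k * pC k with hxdef
  set y : Fin m → ℝ := fun e => ∑ k, C k e * x k with hydef
  set q : Fin n → ℝ := (C * Matrix.diagonal b * Cᵀ) *ᵥ x with hqdef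
  have hqapp : ∀ k, q k = ∑ e, C k e * b e * y e := fun k => hLapp x k
  -- quadratic form identity
  have hxq : ∑ k, x k * q k = ∑ e, b e * (y e) ^ 2 := by
    have h1 : ∀ k, x k * q k = ∑ e, C k e * x k * (b e * y e) := by
      intro k
      rw [hqapp k, Finset.mul_sum]
      exact Finset.sum_congr rfl fun e _ => by ring
    rw [Finset.sum_congr rfl fun k _ => h1 k, Finset.sum_comm]
    refine Finset.sum_congr rfl fun e _ => ?_
    rw [← Finset.sum_mul, show ∑ k, C k e * x k = y e from rfl]
    ring
  -- perturbed points are feasible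
  have hpert : ∀ t : ℝ, (C * Matrix.diagonal b * Cᵀ) *ᵥ (η + t • x) = (pC + t • q) + pD := by
    intro t
    rw [Matrix.mulVec_add, Matrix.mulVec_smul, hfeas, ← hqdef]
    funext k
    simp [Pi.add_apply, Pi.smul_apply]
    ring
  have hineq : ∀ t : ℝ, ∑ k, w k * (pC k) ^ 2 ≤ ∑ k, w k * (pC k + t * q k) ^ 2 := by
    intro t
    have h := hopt (pC + t • q) (η + t • x) (hpert t)
    have h2 : ∑ k, w k * ((pC + t • q) k) ^ 2 = ∑ k, w k * (pC k + t * q k) ^ 2 := by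
      refine Finset.sum_congr rfl fun k _ => ?_
      simp [Pi.add_apply, Pi.smul_apply, smul_eq_mul]
    rw [h2] at h
    linarith
  set a : ℝ := ∑ e, b e * (y e) ^ 2 with hadef
  set c : ℝ := ∑ k, w k * (q k) ^ 2 with hcdef
  have hexp : ∀ t : ℝ, ∑ k, w k * (pC k + t * q k) ^ 2
      = ∑ k, w k * (pC k) ^ 2 + 2 * t * a + t ^ 2 * c := by
    intro t
    have h1 : ∀ k, w k * (pC k + t * q k) ^ 2
        = w k * (pC k) ^ 2 + 2 * t * (x k * q k) + t ^ 2 * (w k * (q k) ^ 2) := by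
      intro k
      show w k * (pC k + t * q k) ^ 2
        = w k * (pC k) ^ 2 + 2 * t * ((w k * pC k) * q k) + t ^ 2 * (w k * (q k) ^ 2)
      ring
    rw [Finset.sum_congr rfl fun k _ => h1 k, Finset.sum_add_distrib, Finset.sum_add_distrib,
      ← Finset.mul_sum, ← Finset.mul_sum, hxq]
  have ha0 : 0 ≤ a := Finset.sum_nonneg fun e _ => mul_nonneg (hb e).le (sq_nonneg _)
  have hc0 : 0 ≤ c := Finset.sum_nonneg fun k _ => mul_nonneg (hw k).le (sq_nonneg _)
  have hkey : ∀ t : ℝ, 0 ≤ 2 * t * a + t ^ 2 * c := by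
    intro t
    have h := hineq t
    rw [hexp t] at h
    linarith
  have ha : a = 0 := by
    have h := hkey (-a / (c + 1))
    have hc1 : (0 : ℝ) < c + 1 := by linarith
    have h2 : 2 * (-a / (c + 1)) * a + (-a / (c + 1)) ^ 2 * c
        = (-(2 * a ^ 2) * (c + 1) + a ^ 2 * c) / (c + 1) ^ 2 := by
      field_simp
    rw [h2] at h
    have hne : ((c : ℝ) + 1) ^ 2 ≠ 0 := by positivity
    have h3 : 0 ≤ -(2 * a ^ 2) * (c + 1) + a ^ 2 * c := by
      have h4 := mul_nonneg h (sq_nonneg (c + 1))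
      rwa [div_mul_cancel₀ _ hne] at h4
    have ha2 : a ^ 2 = 0 := le_antisymm (by nlinarith) (sq_nonneg a)
    exact pow_eq_zero_iff two_ne_zero |>.mp ha2
  have hy : ∀ e : Fin m, y e = 0 := by
    have hz : ∀ e ∈ Finset.univ, b e * (y e) ^ 2 = 0 := by
      rw [← Finset.sum_eq_zero_iff_of_nonneg
        (fun e _ => mul_nonneg (hb e).le (sq_nonneg (y e)))]
      exact ha.symm ▸ rfl
    intro e
    have h := hz e (Finset.mem_univ e)
    have hbe := hb e
    have : (y e) ^ 2 = 0 := by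
      by_contra hcon
      exact hcon (by nlinarith)
    exact pow_eq_zero_iff (by norm_num) |>.mp this
  -- x is constant
  have hconst : ∀ k l : Fin n, x k = x l := connected_constant hC hconn x hy
  -- total balance: ∑ (pC + pD) = 0
  have hsum0 : ∑ k, (pC k + pD k) = 0 := by
    have h1 : ∑ k, ((C * Matrix.diagonal b * Cᵀ) *ᵥ η) k = 0 := by
      rw [Finset.sum_congr rfl fun k _ => hLapp η k, Finset.sum_comm]
      refine Finset.sum_eq_zero fun e _ => ?_
      rw [show (∑ k, C k e * b e * (∑ l, C l e * η l))
          = (∑ k, C k e) * (b e * (∑ l, C l e * η l)) from by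
        rw [Finset.sum_mul]; exact Finset.sum_congr rfl fun k _ => by ring]
      rw [hcol e]; ring
    rw [← h1, hfeas]
    rfl
  have hS : 0 < ∑ k, (w k)⁻¹ :=
    Finset.sum_pos (fun k _ => inv_pos.mpr (hw k)) ⟨i, Finset.mem_univ i⟩
  have hpCk : ∀ k, pC k = x i * (w k)⁻¹ := by
    intro k
    have h2 : w k * pC k = x i := hconst k i
    rw [← h2, mul_comm (w k) (pC k), mul_assoc, mul_inv_cancel₀ (hw k).ne', mul_one]
  have hsum : ∑ k, pC k = x i * ∑ k, (w k)⁻¹ := by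
    rw [Finset.mul_sum]
    exact Finset.sum_congr rfl fun k _ => hpCk k
  have hsum2 : ∑ k, pC k = -∑ k, pD k := by
    rw [Finset.sum_add_distrib] at hsum0
    linarith
  have hkeyeq : pC i * (w i * ∑ k, (w k)⁻¹) = -(∑ k, pD k) := by
    have h1 : w i * pC i = x i := rfl
    calc pC i * (w i * ∑ k, (w k)⁻¹) = (w i * pC i) * ∑ k, (w k)⁻¹ := by ring
      _ = x i * ∑ k, (w k)⁻¹ := by rw [h1]
      _ = ∑ k, pC k := hsum.symm
      _ = -(∑ k, pD k) := hsum2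
  rw [eq_div_iff (ne_of_gt (mul_pos (hw i) hS))]
  exact hkeyeq
end

section
/- For the Lyapunov analysis of the line-limit multiplier dynamics: let χ, χ*, p̄ ∈ ℝ, μ, μ* ∈ [0, K] with K > 0, suppose the equilibrium satisfies the complementarity condition (μ* = 0 and χ* ≤ p̄) or (χ* = p̄) or (μ* = K and χ* ≥ p̄), and define γ = 0 if (μ = 0 and χ ≤ p̄) or (μ = K and χ ≥ p̄), γ = 1 otherwise. Then the scalar υ = (μ* − μ)(χ − χ*) − (μ* − μ)γ(χ − p̄) satisfies υ ≤ 0. -/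
/-- Per-line summand `ῡ_j` in the proof that `Ῡ₂ ≤ 0`: the line-limit multiplier
dynamics are dissipative. -/
theorem line_limit_summand_nonpos
    (χ χstar pbar : ℝ) (K : ℝ) (hK : 0 < K)
    (μ μstar : ℝ) (hμ : μ ∈ Set.Icc 0 K) (hμstar : μstar ∈ Set.Icc 0 K)
    (hcomp : (μstar = 0 ∧ χstar ≤ pbar) ∨ χstar = pbar ∨ (μstar = K ∧ pbar ≤ χstar))
    (γ : ℝ)
    (hγ0 : ((μ = 0 ∧ χ ≤ pbar) ∨ (μ = K ∧ pbar ≤ χ)) → γ = 0)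
    (hγ1 : ¬((μ = 0 ∧ χ ≤ pbar) ∨ (μ = K ∧ pbar ≤ χ)) → γ = 1) :
    (μstar - μ) * (χ - χstar) - (μstar - μ) * γ * (χ - pbar) ≤ 0 := by
  obtain ⟨hμ0, hμK⟩ := hμ
  obtain ⟨hs0, hsK⟩ := hμstar
  by_cases h : ((μ = 0 ∧ χ ≤ pbar) ∨ (μ = K ∧ pbar ≤ χ))
  · rw [hγ0 h]
    rcases h with ⟨h1, h2⟩ | ⟨h1, h2⟩ <;>
      rcases hcomp with ⟨c1, c2⟩ | c | ⟨c1, c2⟩ <;> subst h1 <;> nlinarith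
  · rw [hγ1 h]
    rcases hcomp with ⟨c1, c2⟩ | c | ⟨c1, c2⟩ <;> nlinarith
end

section
/- For the inter-area flow multiplier dynamics: let s, s*, ψ ∈ ℝ, φ, φ* ∈ [K̲, K̄] with K̲ < 0 < K̄, suppose the equilibrium satisfies: if s* > ψ then φ* = K̄, if s* < ψ then φ* = K̲; and define γ = 0 if (φ = K̄ and s ≥ ψ) or (φ = K̲ and s ≤ ψ), γ = 1 otherwise. Then υ = (φ* − φ)(s − s*) − (φ* − φ)γ(s − ψ) ≤ 0. -/
/-- Per-flow summand `υ_k` in the proof that `Υ₃ ≤ 0`: the inter-area flow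
multiplier dynamics are dissipative. -/
theorem interarea_summand_nonpos
    (s sstar ψ : ℝ) (Klow Khigh : ℝ) (hK : Klow < 0 ∧ 0 < Khigh)
    (φ φstar : ℝ) (hφ : φ ∈ Set.Icc Klow Khigh) (hφstar : φstar ∈ Set.Icc Klow Khigh)
    (hcomp1 : ψ < sstar → φstar = Khigh) (hcomp2 : sstar < ψ → φstar = Klow)
    (γ : ℝ)
    (hγ0 : ((φ = Khigh ∧ ψ ≤ s) ∨ (φ = Klow ∧ s ≤ ψ)) → γ = 0)
    (hγ1 : ¬((φ = Khigh ∧ ψ ≤ s) ∨ (φ = Klow ∧ s ≤ ψ)) → γ = 1) :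
    (φstar - φ) * (s - sstar) - (φstar - φ) * γ * (s - ψ) ≤ 0 := by
  obtain ⟨hφl, hφh⟩ := hφ
  obtain ⟨hsl, hsh⟩ := hφstar
  by_cases hc : ((φ = Khigh ∧ ψ ≤ s) ∨ (φ = Klow ∧ s ≤ ψ))
  · have hγ := hγ0 hc
    subst hγ
    rcases hc with ⟨hφe, hs⟩ | ⟨hφe, hs⟩
    · subst hφe
      rcases lt_trichotomy ψ sstar with h | h | h
      · rw [hcomp1 h]; ring_nf; simp
      · nlinarith
      · have := hcomp2 h; nlinarith
    · subst hφe
      rcases lt_trichotomy ψ sstar with h | h | h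
      · have := hcomp1 h; nlinarith
      · nlinarith
      · rw [hcomp2 h]; ring_nf; simp
  · have hγ := hγ1 hc
    subst hγ
    have key : (φstar - φ) * (ψ - sstar) ≤ 0 := by
      rcases lt_trichotomy ψ sstar with h | h | h
      · have := hcomp1 h; nlinarith
      · simp [h]
      · have := hcomp2 h; nlinarith
    nlinarith
end
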